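/- For every α ∈ ℝ there exist T ∈ (−∞, ∞], and differentiable functions a₊, a₋, β₂, β₃ : (−∞, T) → ℝ with a₊(t) > 0 for all t, satisfying the ODE system a₊' = 4a₊a₋, a₋' = 2(a₊ + a₋ − 16)a₋, β₂' = −(a₋ + 4β₃)β₂, β₃' = 4β₃² + 2a₋β₃ + 4a₋, such that a₋(t) = a₊(t) + 4α·√(a₊(t)) + 16 for all t, and as t → −∞ one has a₊(t) → 0, a₋(t) → 16, β₂(t) → 1, and β₃(t) → −4. -/

import Mathlib

/-
Write `x = √a₊`. The constraint reads `a₋ = x² + 4αx + 16`, and both equations for `a₊` and `a₋`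
reduce to the scalar equation `x' = 2x a₋(x)`. Near `0` its right-hand side is at most `34x`,
so the travel time from `0` is infinite; inverting the travel time yields an orbit with
`x → 0` as `t → -∞`.

The substitution `β₂ = Z(x)`, `β₃ = -a₋/4 - a₋ x Z'(x) / (2 Z(x))` linearises the Riccati
equation for `β₃` into `4x a₋ Z'' + (12x² + 32αx + 64) Z' + (3x + 4α) Z = 0`, which has a regular
singular point at `0` with double exponent `0`. Its power-series solution with `Z(0) = 1` has
coefficients bounded by `(|α| + 1)ⁿ`, hence converges near `0`; then `β₂ → 1` and `β₃ → -4`.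
-/

open Filter Set Real Topology

namespace WenteWhitham

noncomputable def travelTime (g : ℝ → ℝ) (c x : ℝ) : ℝ := ∫ s in c..x, (g s)⁻¹

section Flow

variable {g : ℝ → ℝ} {b c L : ℝ}

lemma hasDerivAt_travelTime (hg : ContinuousOn g (Ioo 0 b))
    (hpos : ∀ x ∈ Ioo 0 b, 0 < g x) (hc : c ∈ Ioo 0 b) {x : ℝ} (hx : x ∈ Ioo 0 b) :
    HasDerivAt (travelTime g c) (g x)⁻¹ x := by
  have hinv : ContinuousOn (fun s => (g s)⁻¹) (Ioo 0 b) :=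
    hg.inv₀ fun s hs => (hpos s hs).ne'
  exact intervalIntegral.integral_hasDerivAt_right
    ((hinv.mono (ordConnected_Ioo.uIcc_subset hc hx)).intervalIntegrable)
    (hinv.stronglyMeasurableAtFilter isOpen_Ioo x hx)
    (hinv.continuousAt (isOpen_Ioo.mem_nhds hx))

lemma strictMonoOn_travelTime (hg : ContinuousOn g (Ioo 0 b))
    (hpos : ∀ x ∈ Ioo 0 b, 0 < g x) (hc : c ∈ Ioo 0 b) :
    StrictMonoOn (travelTime g c) (Ioo 0 b) := by
  have hderiv := fun x (hx : x ∈ Ioo 0 b) => hasDerivAt_travelTime hg hpos hc hx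
  refine strictMonoOn_of_hasDerivWithinAt_pos (convex_Ioo 0 b)
    (fun x hx => (hderiv x hx).continuousAt.continuousWithinAt) (fun x hx => ?_)
    (fun x hx => inv_pos.2 (hpos x (interior_subset hx)))
  exact (hderiv x (interior_subset hx)).hasDerivWithinAt

/-- Comparison with the flow of `x' = L x`, whose travel time is `(log x - log c) / L`. -/
lemma travelTime_le (hg : ContinuousOn g (Ioo 0 b)) (hpos : ∀ x ∈ Ioo 0 b, 0 < g x)
    (hle : ∀ x ∈ Ioo 0 b, g x ≤ L * x) (hc : c ∈ Ioo 0 b) {x : ℝ} (hx : x ∈ Ioo 0 b)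
    (hxc : x ≤ c) : travelTime g c x ≤ (log x - log c) / L := by
  have hderiv : ∀ y ∈ Ioo 0 b,
      HasDerivAt (fun y => travelTime g c y - log y / L) ((g y)⁻¹ - y⁻¹ / L) y :=
    fun y hy => (hasDerivAt_travelTime hg hpos hc hy).sub ((hasDerivAt_log hy.1.ne').div_const L)
  have hmono : MonotoneOn (fun y => travelTime g c y - log y / L) (Ioo 0 b) := by
    refine monotoneOn_of_hasDerivWithinAt_nonneg (convex_Ioo 0 b) (f' := fun y => (g y)⁻¹ - y⁻¹ / L)
      (fun y hy => (hderiv y hy).continuousAt.continuousWithinAt) (fun y hy => ?_) (fun y hy => ?_)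
      <;> rw [interior_Ioo] at hy
    · exact (hderiv y hy).hasDerivWithinAt
    · rw [sub_nonneg, div_eq_mul_inv, ← mul_inv, mul_comm]
      exact inv_anti₀ (hpos y hy) (hle y hy)
  have := hmono hx hc hxc
  simp only [travelTime, intervalIntegral.integral_same] at this
  rw [sub_div]
  unfold travelTime
  linarith

lemma tendsto_travelTime_nhdsGT_zero (hg : ContinuousOn g (Ioo 0 b))
    (hpos : ∀ x ∈ Ioo 0 b, 0 < g x) (hle : ∀ x ∈ Ioo 0 b, g x ≤ L * x) (hc : c ∈ Ioo 0 b) :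
    Tendsto (travelTime g c) (𝓝[>] 0) atBot := by
  have hL : 0 < L := pos_of_mul_pos_left ((hpos c hc).trans_le (hle c hc)) hc.1.le
  have hlog : Tendsto (fun x => (log x - log c) / L) (𝓝[>] 0) atBot := by
    simpa only [sub_eq_add_neg] using
      (tendsto_atBot_add_const_right _ (-log c) tendsto_log_nhdsGT_zero).atBot_div_const hL
  refine tendsto_atBot_mono' _ ?_ hlog
  filter_upwards [Ioo_mem_nhdsGT hc.1] with x hx
  exact travelTime_le hg hpos hle hc ⟨hx.1, hx.2.trans hc.2⟩ hx.2.le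

lemma bijOn_travelTime (hg : ContinuousOn g (Ioo 0 b))
    (hpos : ∀ x ∈ Ioo 0 b, 0 < g x) (hle : ∀ x ∈ Ioo 0 b, g x ≤ L * x) (hc : c ∈ Ioo 0 b) :
    BijOn (travelTime g c) (Ioo 0 c) (Iio 0) := by
  have hsub : Ioo 0 c ⊆ Ioo 0 b := Ioo_subset_Ioo_right hc.2.le
  have hmono := strictMonoOn_travelTime hg hpos hc
  have hcc : travelTime g c c = 0 := intervalIntegral.integral_same
  refine ⟨fun x hx => ?_, (hmono.mono hsub).injOn, fun t (ht : t < 0) => ?_⟩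
  · rw [mem_Iio, ← hcc]
    exact hmono (hsub hx) hc hx.2
  · obtain ⟨u, hut, hu⟩ := (((tendsto_travelTime_nhdsGT_zero hg hpos hle hc).eventually
      (eventually_lt_atBot t)).and (Ioo_mem_nhdsGT hc.1)).exists
    have hcont : ContinuousOn (travelTime g c) (Icc u c) := fun x hx =>
      (hasDerivAt_travelTime hg hpos hc ⟨hu.1.trans_le hx.1, hx.2.trans_lt hc.2⟩).continuousAt
        |>.continuousWithinAt
    obtain ⟨x, hx, hxt⟩ := intermediate_value_Ico hu.2.le hcont ⟨hut.le, hcc ▸ ht⟩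
    exact ⟨x, ⟨hu.1.trans_le hx.1, hx.2⟩, hxt⟩

/-- The orbit is obtained by inverting the travel time, which is infinite from `0` because `g` is
at most linear there. -/
theorem exists_hasDerivAt_tendsto_atBot (hb : 0 < b) (hg : ContinuousOn g (Ioo 0 b))
    (hpos : ∀ x ∈ Ioo 0 b, 0 < g x) (hle : ∀ x ∈ Ioo 0 b, g x ≤ L * x) :
    ∃ φ : ℝ → ℝ, (∀ t < 0, φ t ∈ Ioo 0 b ∧ HasDerivAt φ (g (φ t)) t) ∧
      Tendsto φ atBot (𝓝 0) := by
  set c := b / 2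
  have hc : c ∈ Ioo 0 b := ⟨half_pos hb, half_lt_self hb⟩
  set G := travelTime g c
  have hsub : Ioo 0 c ⊆ Ioo 0 b := Ioo_subset_Ioo_right hc.2.le
  have hG := bijOn_travelTime hg hpos hle hc
  have hmono : StrictMonoOn G (Ioo 0 c) := (strictMonoOn_travelTime hg hpos hc).mono hsub
  set φ := Function.invFunOn G (Ioo 0 c)
  have hφ : BijOn φ (Iio 0) (Ioo 0 c) :=
    hG.invOn_invFunOn.symm.bijOn hG.surjOn.mapsTo_invFunOn hG.mapsTo
  have hGφ : ∀ t < 0, G (φ t) = t := fun t ht => hG.invOn_invFunOn.2 ht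
  have hφ_lt : ∀ t < 0, ∀ x ∈ Ioo 0 c, φ t < x ↔ t < G x := fun t ht x hx => by
    rw [← hmono.lt_iff_lt (hφ.mapsTo ht) hx, hGφ t ht]
  have hφ_mono : MonotoneOn φ (Iio 0) := fun s hs t ht hst => by
    rw [← hmono.le_iff_le (hφ.mapsTo hs) (hφ.mapsTo ht), hGφ s hs, hGφ t ht]
    exact hst
  refine ⟨φ, fun t ht => ⟨hsub (hφ.mapsTo ht), ?_⟩, ?_⟩
  · have hcont : ContinuousAt φ t := continuousAt_of_monotoneOn_of_image_mem_nhds hφ_mono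
      (Iio_mem_nhds ht) (hφ.image_eq ▸ isOpen_Ioo.mem_nhds (hφ.mapsTo ht))
    have hderiv := hasDerivAt_travelTime hg hpos hc (hsub (hφ.mapsTo ht))
    simpa only [inv_inv] using hderiv.of_local_left_inverse hcont
      (inv_ne_zero (hpos _ (hsub (hφ.mapsTo ht))).ne')
      (eventually_of_mem (Iio_mem_nhds ht) hGφ)
  · refine tendsto_order.2 ⟨fun a ha => ?_, fun a ha => ?_⟩
    · filter_upwards [eventually_lt_atBot 0] with t ht
      exact ha.trans (hφ.mapsTo ht).1
    · set x := min a (c / 2)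
      have hx : x ∈ Ioo 0 c := ⟨lt_min ha (half_pos hc.1),
        (min_le_right _ _).trans_lt (half_lt_self hc.1)⟩
      filter_upwards [eventually_lt_atBot 0, eventually_lt_atBot (G x)] with t ht htx
      exact ((hφ_lt t ht x hx).2 htx).trans_le (min_le_left _ _)

end Flow

/-- `eulerSeries c k` is `θᵏ` applied to `∑ cₙ xⁿ`, where `θ = x d/dx` is the Euler operator. -/
noncomputable def eulerSeries (c : ℕ → ℝ) (k : ℕ) (x : ℝ) : ℝ :=
  ∑' n : ℕ, (n : ℝ) ^ k * c n * x ^ n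

section EulerSeries

variable {c : ℕ → ℝ} {K x : ℝ}

lemma summable_eulerSeries (hc : ∀ n, |c n| ≤ K ^ n) (hx : |x| * K < 1) (k : ℕ) :
    Summable fun n : ℕ => (n : ℝ) ^ k * c n * x ^ n := by
  have hK : 0 ≤ K := (abs_nonneg _).trans (by simpa using hc 1)
  have hxK : ‖|x| * K‖ < 1 := by rwa [norm_of_nonneg (by positivity)]
  refine .of_norm_bounded (summable_pow_mul_geometric_of_norm_lt_one k hxK) fun n => ?_
  have : |c n| * |x| ^ n ≤ K ^ n * |x| ^ n := by gcongr; exact hc n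
  simp only [norm_mul, norm_pow, Real.norm_eq_abs, Nat.abs_cast, mul_pow, mul_assoc]
  exact mul_le_mul_of_nonneg_left (by linarith [mul_comm (|x| ^ n) (K ^ n)]) (by positivity)

lemma hasDerivAt_eulerSeries' (hc : ∀ n, |c n| ≤ K ^ n) (hK : 0 < K) (hx : |x| * K < 1)
    (k : ℕ) :
    HasDerivAt (eulerSeries c k) (∑' n : ℕ, (n : ℝ) ^ k * c n * (n * x ^ (n - 1))) x := by
  obtain ⟨r, hxr, hrK⟩ := exists_between ((lt_div_iff₀ hK).2 hx)
  have hr : 0 < r := (abs_nonneg x).trans_lt hxr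
  have hrK' : ‖r * K‖ < 1 := by
    rw [norm_of_nonneg (by positivity)]; exact (lt_div_iff₀ hK).1 hrK
  show HasDerivAt (fun z => ∑' n : ℕ, (n : ℝ) ^ k * c n * z ^ n) _ x
  refine hasDerivAt_tsum_of_isPreconnected (g := fun (n : ℕ) (z : ℝ) => (n : ℝ) ^ k * c n * z ^ n)
    ((summable_pow_mul_geometric_of_norm_lt_one (k + 1) hrK').div_const r)
    Metric.isOpen_ball (convex_ball 0 r).isPreconnected
    (fun n y _ => (hasDerivAt_pow n y).const_mul _) (fun n y hy => ?_) (Metric.mem_ball_self hr)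
    (summable_eulerSeries hc (by simp) k) (by simpa using hxr)
  rw [mem_ball_zero_iff, Real.norm_eq_abs] at hy
  rcases n with _ | m
  · simp
  have hcm : |c (m + 1)| * |y| ^ m ≤ K ^ (m + 1) * r ^ m := by
    gcongr
    exact hc _
  have hr' : (r * K) ^ (m + 1) / r = K ^ (m + 1) * r ^ m := by
    field_simp
    ring
  rw [Nat.add_sub_cancel, mul_div_assoc, hr']
  simp only [norm_mul, norm_pow, Real.norm_eq_abs, Nat.abs_cast, pow_succ _ k]
  calc _ = ((m + 1 : ℕ) : ℝ) ^ k * (m + 1 : ℕ) * (|c (m + 1)| * |y| ^ m) := by ring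
    _ ≤ _ := by gcongr

lemma hasDerivAt_eulerSeries (hc : ∀ n, |c n| ≤ K ^ n) (hK : 0 < K) (hx : |x| * K < 1)
    (hx₀ : x ≠ 0) (k : ℕ) : HasDerivAt (eulerSeries c k) (eulerSeries c (k + 1) x / x) x := by
  convert hasDerivAt_eulerSeries' hc hK hx k using 1
  rw [eulerSeries, ← tsum_div_const]
  refine tsum_congr fun n => ?_
  rcases n with _ | m
  · simp
  · rw [Nat.add_sub_cancel]
    field_simp
    ring

lemma continuousAt_eulerSeries (hc : ∀ n, |c n| ≤ K ^ n) (hK : 0 < K) (hx : |x| * K < 1)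
    (k : ℕ) : ContinuousAt (eulerSeries c k) x :=
  (hasDerivAt_eulerSeries' hc hK hx k).continuousAt

lemma eulerSeries_apply_zero (c : ℕ → ℝ) (k : ℕ) : eulerSeries c k 0 = 0 ^ k * c 0 := by
  rw [eulerSeries, tsum_eq_single 0 fun n hn => by simp [hn]]
  simp

end EulerSeries

lemma eq_zero_of_hasSum_of_recurrence {R : Type*} [CommRing R] [TopologicalSpace R]
    [IsTopologicalRing R] [T2Space R] {a b d : ℕ → R} {x p q r : R}
    (ha : HasSum (fun n => a n * x ^ n) p) (hb : HasSum (fun n => b n * x ^ n) q)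
    (hd : HasSum (fun n => d n * x ^ n) r) (h₀ : a 0 = 0) (h₁ : a 1 + b 0 = 0)
    (hrec : ∀ n, a (n + 2) + b (n + 1) + d n = 0) : p + x * q + x ^ 2 * r = 0 := by
  have hsum := (((hasSum_nat_add_iff' 2).2 ha).add
    (((hasSum_nat_add_iff' 1).2 hb).mul_left x)).add (hd.mul_left (x ^ 2))
  have hterms : ∀ n, a (n + 2) * x ^ (n + 2) + x * (b (n + 1) * x ^ (n + 1))
      + x ^ 2 * (d n * x ^ n) = 0 := fun n => by linear_combination x ^ (n + 2) * hrec n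
  simp only [hterms] at hsum
  have := hsum.unique hasSum_zero
  simp only [Finset.sum_range_succ, Finset.sum_range_zero] at this
  linear_combination this + x * h₁ + h₀

/-- Taylor coefficients of `β₂` in the variable `√a₊`. -/
noncomputable def coeff (α : ℝ) : ℕ → ℝ
  | 0 => 1
  | 1 => -α / 16
  | n + 2 => -(4 * α * (2 * n + 3) ^ 2 * coeff α (n + 1) + (2 * n + 1) * (2 * n + 3) * coeff α n)
      / (64 * (n + 2) ^ 2)

lemma coeff_recurrence (α : ℝ) (n : ℕ) :
    64 * ((n : ℝ) + 2) ^ 2 * coeff α (n + 2) + 4 * α * (2 * n + 3) ^ 2 * coeff α (n + 1)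
      + (2 * n + 1) * (2 * n + 3) * coeff α n = 0 := by
  rw [coeff]
  field_simp
  ring

lemma abs_coeff_add_two_le (α : ℝ) (n : ℕ) :
    |coeff α (n + 2)| ≤ |α| / 4 * |coeff α (n + 1)| + |coeff α n| / 16 := by
  have hn : (0 : ℝ) ≤ n := n.cast_nonneg
  have hden : (0 : ℝ) < 64 * (n + 2) ^ 2 := by positivity
  rw [coeff, abs_div, abs_neg, abs_of_pos hden, div_le_iff₀ hden]
  refine (abs_add_le _ _).trans ?_
  rw [abs_mul, abs_mul, abs_mul, abs_mul, abs_mul, abs_of_pos (by positivity : (0 : ℝ) < 2 * n + 1),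
    abs_of_pos (by positivity : (0 : ℝ) < 2 * n + 3), abs_of_pos (by norm_num : (0 : ℝ) < 4),
    abs_pow, abs_of_pos (by positivity : (0 : ℝ) < 2 * n + 3)]
  have h₁ : (2 * (n : ℝ) + 3) ^ 2 ≤ 4 * (n + 2) ^ 2 := by nlinarith
  have h₂ : (2 * (n : ℝ) + 1) * (2 * n + 3) ≤ 4 * (n + 2) ^ 2 := by nlinarith
  have := mul_le_mul_of_nonneg_left h₁ (by positivity : 0 ≤ 4 * |α| * |coeff α (n + 1)|)
  have := mul_le_mul_of_nonneg_right h₂ (abs_nonneg (coeff α n))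
  nlinarith

lemma abs_coeff_le (α : ℝ) (n : ℕ) : |coeff α n| ≤ (|α| + 1) ^ n := by
  induction n using Nat.twoStepInduction with
  | zero => simp [coeff]
  | one =>
    rw [coeff, abs_div, abs_neg, abs_of_pos (by norm_num : (0 : ℝ) < 16), pow_one]
    linarith [abs_nonneg α]
  | more n ih₀ ih₁ =>
    refine (abs_coeff_add_two_le α n).trans ?_
    have hK : 1 ≤ |α| + 1 := le_add_of_nonneg_left (abs_nonneg α)
    have hn : (|α| + 1) ^ n ≤ (|α| + 1) ^ (n + 2) := pow_le_pow_right₀ hK (by omega)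
    have h₁ : |α| * |coeff α (n + 1)| ≤ (|α| + 1) ^ (n + 2) := by
      rw [pow_succ' _ (n + 1)]
      exact mul_le_mul (by linarith) ih₁ (abs_nonneg _) (by positivity)
    have h₂ : 0 ≤ (|α| + 1) ^ (n + 2) := by positivity
    linarith

def aMinus (α x : ℝ) : ℝ := x ^ 2 + 4 * α * x + 16

/-- `x` times the linear equation for `Z = eulerSeries (coeff α) 0`, using `x Z' = W₁` and
`x² Z'' = W₂ - W₁` for `Wₖ = eulerSeries (coeff α) k`; the recurrence for `coeff` is its
coefficientwise form. -/
lemma eulerSeries_coeff_ode (α : ℝ) {x : ℝ} (hx : |x| * (|α| + 1) < 1) :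
    4 * aMinus α x * eulerSeries (coeff α) 2 x + 4 * x * (2 * x + 4 * α) * eulerSeries (coeff α) 1 x
      + (3 * x ^ 2 + 4 * α * x) * eulerSeries (coeff α) 0 x = 0 := by
  have hs : ∀ k, HasSum (fun n : ℕ => (n : ℝ) ^ k * coeff α n * x ^ n)
      (eulerSeries (coeff α) k x) := fun k => (summable_eulerSeries (abs_coeff_le α) hx k).hasSum
  have ha : HasSum (fun n : ℕ => 64 * (n : ℝ) ^ 2 * coeff α n * x ^ n)
      (64 * eulerSeries (coeff α) 2 x) :=
    ((hs 2).mul_left 64).congr_fun fun n => by ring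
  have hb : HasSum (fun n : ℕ => 4 * α * (2 * (n : ℝ) + 1) ^ 2 * coeff α n * x ^ n)
      (16 * α * eulerSeries (coeff α) 2 x + 16 * α * eulerSeries (coeff α) 1 x
        + 4 * α * eulerSeries (coeff α) 0 x) :=
    ((((hs 2).mul_left (16 * α)).add ((hs 1).mul_left (16 * α))).add
      ((hs 0).mul_left (4 * α))).congr_fun fun n => by ring
  have hd : HasSum (fun n : ℕ => (2 * (n : ℝ) + 1) * (2 * n + 3) * coeff α n * x ^ n)
      (4 * eulerSeries (coeff α) 2 x + 8 * eulerSeries (coeff α) 1 x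
        + 3 * eulerSeries (coeff α) 0 x) :=
    ((((hs 2).mul_left 4).add ((hs 1).mul_left 8)).add ((hs 0).mul_left 3)).congr_fun
      fun n => by ring
  have key := eq_zero_of_hasSum_of_recurrence ha hb hd (by simp) (by simp [coeff]; ring)
    fun n => by push_cast; linear_combination coeff_recurrence α n
  unfold aMinus
  linear_combination key

noncomputable def betaThree (α x : ℝ) : ℝ :=
  -aMinus α x / 4 - aMinus α x * eulerSeries (coeff α) 1 x / (2 * eulerSeries (coeff α) 0 x)

lemma continuous_aMinus (α : ℝ) : Continuous (aMinus α) := by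
  unfold aMinus
  fun_prop

lemma hasDerivAt_aMinus (α x : ℝ) : HasDerivAt (aMinus α) (2 * x + 4 * α) x :=
  (((hasDerivAt_pow 2 x).add ((hasDerivAt_id' x).const_mul (4 * α))).add_const 16).congr_deriv
    (by ring)

lemma hasDerivAt_betaThree {α x : ℝ} (hx : |x| * (|α| + 1) < 1) (hx₀ : x ≠ 0)
    (hW : eulerSeries (coeff α) 0 x ≠ 0) (hA : aMinus α x ≠ 0) :
    HasDerivAt (betaThree α) ((4 * betaThree α x ^ 2 + 2 * aMinus α x * betaThree α x
      + 4 * aMinus α x) / (2 * x * aMinus α x)) x := by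
  have hK : (0 : ℝ) < |α| + 1 := by positivity
  have hW₀ := hasDerivAt_eulerSeries (abs_coeff_le α) hK hx hx₀ 0
  have hW₁ := hasDerivAt_eulerSeries (abs_coeff_le α) hK hx hx₀ 1
  have hA' := hasDerivAt_aMinus α x
  have := ((hA'.neg.div_const 4).sub ((hA'.mul hW₁).div (hW₀.const_mul 2)
    (mul_ne_zero two_ne_zero hW)))
  refine this.congr_deriv ?_
  have hid := eulerSeries_coeff_ode α hx
  unfold betaThree
  set W₀ := eulerSeries (coeff α) 0 x
  set W₁ := eulerSeries (coeff α) 1 x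
  simp only [Pi.mul_apply]
  field_simp
  unfold aMinus at *
  linear_combination (-4 * W₀) * hid

lemma hasDerivAt_sq_div {α x : ℝ} (hx₀ : x ≠ 0) (hA : aMinus α x ≠ 0) :
    HasDerivAt (fun y => y ^ 2) (4 * x ^ 2 * aMinus α x / (2 * x * aMinus α x)) x :=
  (hasDerivAt_pow 2 x).congr_deriv <| by
    rw [eq_div_iff (mul_ne_zero (mul_ne_zero two_ne_zero hx₀) hA)]
    ring

lemma hasDerivAt_aMinus_div {α x : ℝ} (hx₀ : x ≠ 0) (hA : aMinus α x ≠ 0) :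
    HasDerivAt (aMinus α)
      (2 * (x ^ 2 + aMinus α x - 16) * aMinus α x / (2 * x * aMinus α x)) x :=
  (hasDerivAt_aMinus α x).congr_deriv <| by
    rw [eq_div_iff (mul_ne_zero (mul_ne_zero two_ne_zero hx₀) hA)]
    unfold aMinus
    ring

lemma hasDerivAt_eulerSeries_coeff_zero {α x : ℝ} (hx : |x| * (|α| + 1) < 1) (hx₀ : x ≠ 0)
    (hW : eulerSeries (coeff α) 0 x ≠ 0) (hA : aMinus α x ≠ 0) :
    HasDerivAt (eulerSeries (coeff α) 0)
      (-(aMinus α x + 4 * betaThree α x) * eulerSeries (coeff α) 0 x / (2 * x * aMinus α x)) x :=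
  (hasDerivAt_eulerSeries (abs_coeff_le α) (by positivity) hx hx₀ 0).congr_deriv
    (by unfold betaThree; field_simp; ring)

lemma HasDerivAt.comp_of_div {f φ : ℝ → ℝ} {F G t : ℝ} (hf : HasDerivAt f (F / G) (φ t))
    (hφ : HasDerivAt φ G t) (hG : G ≠ 0) : HasDerivAt (fun s => f (φ s)) F t :=
  (hf.comp t hφ).congr_deriv (div_mul_cancel₀ F hG)

lemma exists_radius (α : ℝ) : ∃ b > 0, ∀ x ∈ Ioo 0 b, |x| * (|α| + 1) < 1 ∧
    eulerSeries (coeff α) 0 x ≠ 0 ∧ aMinus α x ∈ Ioo 0 17 := by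
  have hK : ∀ᶠ x in 𝓝 (0 : ℝ), |x| * (|α| + 1) < 1 :=
    (continuous_abs.mul continuous_const).continuousAt.preimage_mem_nhds (Iio_mem_nhds (by simp))
  have hW : ∀ᶠ x in 𝓝 0, eulerSeries (coeff α) 0 x ≠ 0 :=
    (continuousAt_eulerSeries (abs_coeff_le α) (by positivity) (by simp) 0).eventually_ne
      (by simp [eulerSeries_apply_zero, coeff])
  have hA : ∀ᶠ x in 𝓝 0, aMinus α x ∈ Ioo 0 17 :=
    (continuous_aMinus α).continuousAt.preimage_mem_nhds
      (Ioo_mem_nhds (by norm_num [aMinus]) (by norm_num [aMinus]))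
  obtain ⟨b, hb, hball⟩ := Metric.eventually_nhds_iff.1 (hK.and (hW.and hA))
  refine ⟨b, hb, fun x hx => hball ?_⟩
  rw [dist_zero_right, norm_of_nonneg hx.1.le]
  exact hx.2

theorem exists_orbit (α : ℝ) : ∃ φ : ℝ → ℝ, (∀ t < 0, 0 < φ t ∧ |φ t| * (|α| + 1) < 1 ∧
    eulerSeries (coeff α) 0 (φ t) ≠ 0 ∧ aMinus α (φ t) ≠ 0 ∧
    HasDerivAt φ (2 * φ t * aMinus α (φ t)) t) ∧ Tendsto φ atBot (𝓝 0) := by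
  obtain ⟨b, hb, hgood⟩ := exists_radius α
  obtain ⟨φ, hφ, hlim⟩ := exists_hasDerivAt_tendsto_atBot (g := fun x => 2 * x * aMinus α x)
    (L := 34) hb (by have := continuous_aMinus α; fun_prop)
    (fun x hx => mul_pos (mul_pos two_pos hx.1) (hgood x hx).2.2.1)
    (fun x hx => by nlinarith [hx.1, (hgood x hx).2.2.2])
  refine ⟨φ, fun t ht => ?_, hlim⟩
  obtain ⟨hφt, hderiv⟩ := hφ t ht
  obtain ⟨hK, hW, hA⟩ := hgood _ hφt
  exact ⟨hφt.1, hK, hW, hA.1.ne', hderiv⟩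

lemma tendsto_eulerSeries_coeff_zero (α : ℝ) :
    Tendsto (eulerSeries (coeff α) 0) (𝓝 0) (𝓝 1) := by
  simpa [eulerSeries_apply_zero, coeff] using
    (continuousAt_eulerSeries (abs_coeff_le α) (by positivity) (x := 0) (by simp) 0).tendsto

lemma tendsto_betaThree (α : ℝ) : Tendsto (betaThree α) (𝓝 0) (𝓝 (-4)) := by
  have hK : (0 : ℝ) < |α| + 1 := by positivity
  have hA := (continuous_aMinus α).continuousAt (x := 0)
  have hW := fun k => continuousAt_eulerSeries (abs_coeff_le α) hK (x := 0) (by simp) k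
  have hcont : ContinuousAt (betaThree α) 0 :=
    (hA.neg.div_const 4).sub ((hA.mul (hW 1)).div (continuousAt_const.mul (hW 0))
      (by simp [eulerSeries_apply_zero, coeff]))
  convert hcont.tendsto using 2
  norm_num [betaThree, aMinus, eulerSeries_apply_zero]

end WenteWhitham

open WenteWhitham in
theorem stmt_5 (α : ℝ) :
    ∃ T : EReal, ⊥ < T ∧ ∃ ap am β₂ β₃ : ℝ → ℝ,
      (∀ t : ℝ, (t : EReal) < T → 0 < ap t) ∧
      (∀ t : ℝ, (t : EReal) < T → HasDerivAt ap (4 * ap t * am t) t) ∧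
      (∀ t : ℝ, (t : EReal) < T →
        HasDerivAt am (2 * (ap t + am t - 16) * am t) t) ∧
      (∀ t : ℝ, (t : EReal) < T →
        HasDerivAt β₂ (-(am t + 4 * β₃ t) * β₂ t) t) ∧
      (∀ t : ℝ, (t : EReal) < T →
        HasDerivAt β₃ (4 * β₃ t ^ 2 + 2 * am t * β₃ t + 4 * am t) t) ∧
      (∀ t : ℝ, (t : EReal) < T →
        am t = ap t + 4 * α * Real.sqrt (ap t) + 16) ∧
      Tendsto ap atBot (nhds 0) ∧
      Tendsto am atBot (nhds 16) ∧
      Tendsto β₂ atBot (nhds 1) ∧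
      Tendsto β₃ atBot (nhds (-4)) := by
  obtain ⟨φ, hφ, hlim⟩ := exists_orbit α
  refine ⟨(0 : ℝ), EReal.bot_lt_coe 0, fun t => φ t ^ 2, fun t => aMinus α (φ t),
    fun t => eulerSeries (coeff α) 0 (φ t), fun t => betaThree α (φ t), ?_⟩
  simp only [EReal.coe_lt_coe_iff]
  refine ⟨fun t ht => pow_pos (hφ t ht).1 2, fun t ht => ?_, fun t ht => ?_, fun t ht => ?_,
    fun t ht => ?_, fun t ht => ?_, by simpa using hlim.pow 2,
    ((continuous_aMinus α).tendsto' 0 16 (by norm_num [aMinus])).comp hlim,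
    (tendsto_eulerSeries_coeff_zero α).comp hlim, (tendsto_betaThree α).comp hlim⟩
  all_goals obtain ⟨hx, hK, hW, hA, hφt⟩ := hφ t ht
  · exact (hasDerivAt_sq_div hx.ne' hA).comp_of_div hφt (by positivity)
  · exact (hasDerivAt_aMinus_div hx.ne' hA).comp_of_div hφt (by positivity)
  · exact (hasDerivAt_eulerSeries_coeff_zero hK hx.ne' hW hA).comp_of_div hφt (by positivity)
  · exact (hasDerivAt_betaThree hK hx.ne' hW hA).comp_of_div hφt (by positivity)
  · rw [Real.sqrt_sq hx.le, aMinus]
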